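/- On the region |x| > 1, the radial function W_n is smooth and satisfies det D²W_n = 1 pointwise. -/

import Mathlib

open MeasureTheory

/-- The Hessian matrix of `u` at `x`, with entries the iterated directional derivatives
along the standard basis vectors of Euclidean space. -/
noncomputable def hess (n : ℕ) (u : EuclideanSpace ℝ (Fin n) → ℝ)
    (x : EuclideanSpace ℝ (Fin n)) : Matrix (Fin n) (Fin n) ℝ :=
  Matrix.of fun i j =>
    fderiv ℝ (fun y => fderiv ℝ u y (EuclideanSpace.single j 1)) x (EuclideanSpace.single i 1)

section auxiliary
open Real Filter


lemma analyticAt_primitive {f g : ℝ → ℝ} {c : ℝ}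
    (hg : AnalyticAt ℝ g c) (hf : ∀ x, HasDerivAt f (g x) x) : AnalyticAt ℝ f c := by
  obtain ⟨p, r, hp⟩ := hg
  obtain ⟨ρ, hρ0, hρr⟩ := ENNReal.lt_iff_exists_nnreal_btwn.1 hp.r_pos
  have hρrad : (ρ : ENNReal) < p.radius := lt_of_lt_of_le hρr hp.r_le
  have hρpos : (0 : ℝ) < ρ := by exact_mod_cast hρ0
  have hsum : Summable fun k => ‖p.coeff k‖ * (ρ:ℝ) ^ k := by
    simpa [FormalMultilinearSeries.norm_apply_eq_norm_coef] using
      p.summable_norm_mul_pow hρrad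
  -- coefficients of the primitive
  set q : ℕ → ℝ := fun k => if k = 0 then f c else p.coeff (k-1) / k with hq
  set gk : ℕ → ℝ → ℝ := fun k y => q k * (y - c) ^ k with hgk
  set gk' : ℕ → ℝ → ℝ := fun k y => if k = 0 then 0 else p.coeff (k-1) * (y - c) ^ (k-1)
    with hgk'
  set u : ℕ → ℝ := fun k => if k = 0 then 0 else ‖p.coeff (k-1)‖ * (ρ:ℝ) ^ (k-1) with hu
  have hu_sum : Summable u := by
    rw [← summable_nat_add_iff 1]
    simpa [hu] using hsum
  have hderiv : ∀ k y, HasDerivAt (gk k) (gk' k y) y := by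
    intro k y
    match k with
    | 0 => simpa [hgk, hgk'] using hasDerivAt_const y (q 0)
    | (j+1) =>
      have h1 : HasDerivAt (fun y : ℝ => (y - c) ^ (j+1)) ((j+1) * (y - c) ^ j) y := by
        simpa using (((hasDerivAt_id y).sub_const c).fun_pow (j+1))
      have := h1.const_mul (q (j+1))
      refine this.congr_deriv ?_
      simp only [hgk', hq, Nat.add_sub_cancel, Nat.add_one_ne_zero, if_false, Nat.cast_add, Nat.cast_one]
      field_simp
  have hbound : ∀ k y, y ∈ Metric.ball c (ρ:ℝ) → ‖gk' k y‖ ≤ u k := by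
    intro k y hy
    rcases k with _ | j
    · simp [hgk', hu]
    · simp only [hgk', hu, Nat.add_sub_cancel, if_neg (Nat.succ_ne_zero j)]
      rw [norm_mul, norm_pow]
      gcongr
      rw [Real.norm_eq_abs, ← Real.dist_eq]
      exact le_of_lt (Metric.mem_ball.1 hy)
  have hsum0 : Summable fun k => gk k c := by
    apply summable_of_ne_finset_zero (s := {0})
    intro k hk
    simp only [Finset.mem_singleton] at hk
    simp [hgk, zero_pow hk]
  set S : ℝ → ℝ := fun y => ∑' k, gk k y with hS
  have hSd : ∀ y ∈ Metric.ball c (ρ:ℝ), HasDerivAt S (g y) y := by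
    intro y hy
    have := hasDerivAt_tsum_of_isPreconnected hu_sum Metric.isOpen_ball
      (convex_ball c (ρ:ℝ)).isPreconnected (fun k y _ => hderiv k y)
      (fun k y hy => hbound k y hy) (Metric.mem_ball_self hρpos) hsum0 hy
    refine this.congr_deriv ?_
    -- g y = ∑' k, gk' k y
    have hmem : y - c ∈ Metric.eball (0:ℝ) r := by
      rw [Metric.mem_eball, edist_zero_right]
      refine lt_trans ?_ hρr
      rw [enorm_eq_nnnorm, ENNReal.coe_lt_coe, ← NNReal.coe_lt_coe, coe_nnnorm,
        Real.norm_eq_abs, ← Real.dist_eq]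
      exact Metric.mem_ball.1 hy
    have hy' : HasSum (fun j => gk' (j+1) y) (g y) := by
      have h2 := hp.hasSum hmem
      simp only [FormalMultilinearSeries.apply_eq_pow_smul_coeff, smul_eq_mul,
        add_sub_cancel] at h2
      have : (fun j => gk' (j+1) y) = fun j => (y - c)^j * p.coeff j := by
        funext j
        simp [hgk', mul_comm]
      rw [this]
      exact h2
    have hy'' : HasSum (fun k => gk' k y) (g y) := by
      have := (hasSum_nat_add_iff (f := fun k => gk' k y) 1).1 hy'
      simpa [hgk'] using this
    exact hy''.tsum_eq
  -- f = S + const on the ball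
  have hconst : ∀ y ∈ Metric.ball c (ρ:ℝ), f y - S y = f c - S c := by
    intro y hy
    refine Convex.is_const_of_fderivWithin_eq_zero (𝕜 := ℝ) (f := fun z => f z - S z)
      (convex_ball c (ρ:ℝ)) ?_ ?_ hy (Metric.mem_ball_self hρpos)
    · intro z hz
      exact ((hf z).sub (hSd z hz)).differentiableAt.differentiableWithinAt
    · intro z hz
      have h0 : HasDerivAt (fun z => f z - S z) 0 z := by
        simpa using (hf z).fun_sub (hSd z hz)
      rw [fderivWithin_of_isOpen Metric.isOpen_ball hz]
      have := h0.hasFDerivAt.fderiv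
      rw [this]
      ext
      simp
  -- power series for S
  have hqsum : Summable fun k => ‖q k‖ * (ρ:ℝ) ^ k := by
    rw [← summable_nat_add_iff 1]
    refine Summable.of_nonneg_of_le (fun k => by positivity) ?_ (hsum.mul_right (ρ:ℝ))
    intro k
    simp only [hq, Nat.add_sub_cancel, if_neg (Nat.succ_ne_zero k)]
    rw [norm_div, pow_succ, ← mul_assoc]
    gcongr
    have h1 : (1:ℝ) ≤ ‖((k+1 : ℕ) : ℝ)‖ := by
      rw [Real.norm_natCast]
      exact_mod_cast Nat.one_le_iff_ne_zero.2 (Nat.succ_ne_zero k)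
    exact div_le_self (norm_nonneg _) h1
  have hSanalytic : AnalyticAt ℝ S c := by
    refine ⟨FormalMultilinearSeries.ofScalars ℝ q, (ρ:ENNReal), ?_, hρ0, ?_⟩
    · apply FormalMultilinearSeries.le_radius_of_summable
      simp only [FormalMultilinearSeries.ofScalars_norm]
      exact hqsum
    · intro z hz
      rw [EMetric.mem_ball, edist_zero_right] at hz
      have hz' : ‖z‖ < (ρ:ℝ) := by
        rwa [enorm_eq_nnnorm, ENNReal.coe_lt_coe, ← NNReal.coe_lt_coe, coe_nnnorm] at hz
      have hsummable : Summable fun k => gk k (c + z) := by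
        apply Summable.of_norm
        apply Summable.of_nonneg_of_le (fun k => norm_nonneg _) _ hqsum
        intro k
        simp only [hgk, add_sub_cancel_left, norm_mul, norm_pow]
        gcongr
      have : (fun k => (FormalMultilinearSeries.ofScalars ℝ q k) fun _ => z)
          = fun k => gk k (c + z) := by
        funext k
        rw [FormalMultilinearSeries.ofScalars_apply_eq]
        simp [hgk, smul_eq_mul]
      rw [this]
      exact hsummable.hasSum
  have : AnalyticAt ℝ (fun y => S y + (f c - S c)) c :=
    hSanalytic.add analyticAt_const
  apply this.congr
  filter_upwards [Metric.ball_mem_nhds c hρpos] with y hy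
  have := hconst y hy
  linarith


noncomputable def fW (n : ℕ) (s : ℝ) : ℝ := (max (s ^ n - 1) 0) ^ ((1:ℝ)/n)
noncomputable def FW (n : ℕ) (t : ℝ) : ℝ := ∫ s in (0:ℝ)..t, fW n s
noncomputable def AW (n : ℕ) (r : ℝ) : ℝ := (r ^ n - 1) ^ ((1:ℝ)/n)
noncomputable def AW' (n : ℕ) (r : ℝ) : ℝ :=
  (1/(n:ℝ)) * (r ^ n - 1) ^ ((1:ℝ)/n - 1) * ((n:ℝ) * r ^ (n-1))
noncomputable def GW (n : ℕ) (r : ℝ) : ℝ := AW n r / r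
noncomputable def GW' (n : ℕ) (r : ℝ) : ℝ := (AW' n r * r - AW n r) / r ^ 2

lemma pow_pos_of_one_lt' {n : ℕ} (hn : 1 ≤ n) {r : ℝ} (hr : 1 < r) : 0 < r ^ n - 1 := by
  have : 1 < r ^ n := one_lt_pow₀ hr (by omega)
  linarith

lemma fW_eq {n : ℕ} (hn : 1 ≤ n) {r : ℝ} (hr : 1 < r) :
    fW n r = AW n r := by
  rw [fW, AW, max_eq_left (le_of_lt (pow_pos_of_one_lt' hn hr))]

lemma fW_cont (n : ℕ) (hn : 1 ≤ n) : Continuous (fW n) := by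
  have h : ∀ s : ℝ, ContinuousAt (fW n) s := by
    intro s
    apply ContinuousAt.rpow_const
    · exact ((continuousAt_pow s n).sub continuousAt_const).max continuousAt_const
    · right; positivity
  exact continuous_iff_continuousAt.2 h

lemma FW_hasDerivAt (n : ℕ) (hn : 1 ≤ n) (t : ℝ) : HasDerivAt (FW n) (fW n t) t :=
  ((fW_cont n hn).integral_hasStrictDerivAt 0 t).hasDerivAt

lemma AW_hasDerivAt {n : ℕ} (hn : 1 ≤ n) {r : ℝ} (hr : 1 < r) :
    HasDerivAt (AW n) (AW' n r) r := by
  have ht : r ^ n - 1 ≠ 0 := ne_of_gt (pow_pos_of_one_lt' hn hr)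
  have h1 : HasDerivAt (fun s : ℝ => s ^ n - 1) ((n:ℝ) * r ^ (n-1)) r :=
    (hasDerivAt_pow n r).sub_const 1
  exact (Real.hasDerivAt_rpow_const (p := (1:ℝ)/n) (Or.inl ht)).comp r h1

lemma GW_hasDerivAt {n : ℕ} (hn : 1 ≤ n) {r : ℝ} (hr : 1 < r) :
    HasDerivAt (GW n) (GW' n r) r := by
  have hr0 : r ≠ 0 := by positivity
  have := (AW_hasDerivAt hn hr).fun_div (hasDerivAt_id r) hr0
  refine (show HasDerivAt (GW n) _ r from this).congr_deriv ?_
  simp [GW']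

lemma hasFDerivAt_norm' {E : Type*} [NormedAddCommGroup E] [InnerProductSpace ℝ E]
    {x : E} (hx : x ≠ 0) :
    HasFDerivAt (fun y : E => ‖y‖) (‖x‖⁻¹ • innerSL ℝ x) x := by
  have hsq : (‖x‖ : ℝ)^2 ≠ 0 := pow_ne_zero 2 (norm_ne_zero_iff.2 hx)
  have h1 : HasFDerivAt (fun y : E => ‖y‖^2) (2 • innerSL ℝ x) x :=
    (hasStrictFDerivAt_norm_sq x).hasFDerivAt
  have h2 := (Real.hasDerivAt_sqrt hsq).comp_hasFDerivAt x h1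
  have hfun : ((fun x => √x) ∘ fun y : E => ‖y‖ ^ 2) = fun y : E => ‖y‖ := by
    funext y; simp only [Function.comp]; rw [Real.sqrt_sq (norm_nonneg y)]
  rw [hfun] at h2
  refine h2.congr_fderiv ?_
  ext v
  rw [Real.sqrt_sq (norm_nonneg x)]
  simp only [ContinuousLinearMap.smul_apply, smul_eq_mul, two_smul,
    ContinuousLinearMap.add_apply]
  have hxn : ‖x‖ ≠ 0 := norm_ne_zero_iff.2 hx
  field_simp
  ring

-- first derivative of W on the region
lemma W_fderiv {n : ℕ} (hn : 1 ≤ n) {y : EuclideanSpace ℝ (Fin n)} (hy : 1 < ‖y‖) :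
    HasFDerivAt (fun z : EuclideanSpace ℝ (Fin n) => FW n ‖z‖)
      (fW n ‖y‖ • (‖y‖⁻¹ • innerSL ℝ y)) y := by
  have hy0 : y ≠ 0 := by
    intro h; rw [h, norm_zero] at hy; linarith
  exact (FW_hasDerivAt n hn ‖y‖).comp_hasFDerivAt y (hasFDerivAt_norm' hy0)

lemma hess_entry {n : ℕ} (hn : 1 ≤ n) (W : EuclideanSpace ℝ (Fin n) → ℝ)
    (hWdef : W = fun z => FW n ‖z‖)
    {x : EuclideanSpace ℝ (Fin n)} (hx : 1 < ‖x‖) (i j : Fin n) :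
    fderiv ℝ (fun y => fderiv ℝ W y (EuclideanSpace.single j 1)) x (EuclideanSpace.single i 1)
      = GW n ‖x‖ * (if i = j then 1 else 0) + (GW' n ‖x‖ * ‖x‖⁻¹) * (x i * x j) := by
  have hx0 : x ≠ 0 := by intro h; rw [h, norm_zero] at hx; linarith
  have hopen : IsOpen {z : EuclideanSpace ℝ (Fin n) | 1 < ‖z‖} :=
    isOpen_lt continuous_const continuous_norm
  have heq : (fun y => fderiv ℝ W y (EuclideanSpace.single j 1))
      =ᶠ[nhds x] fun y => GW n ‖y‖ * y j := by
    filter_upwards [hopen.mem_nhds hx] with y hy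
    have hy' : (1:ℝ) < ‖y‖ := hy
    have hW' := W_fderiv hn hy'
    rw [hWdef, hW'.fderiv]
    simp only [ContinuousLinearMap.smul_apply, smul_eq_mul, innerSL_apply_apply,
      EuclideanSpace.inner_single_right, RCLike.star_def, conj_trivial, one_mul]
    rw [fW_eq hn hy', GW]
    ring
  rw [heq.fderiv_eq]
  have hy0' : ((1:ℝ) < ‖x‖) := hx
  have hc : HasFDerivAt (fun y : EuclideanSpace ℝ (Fin n) => GW n ‖y‖)
      (GW' n ‖x‖ • (‖x‖⁻¹ • innerSL ℝ x)) x :=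
    (GW_hasDerivAt hn hx).comp_hasFDerivAt x (hasFDerivAt_norm' hx0)
  have hd : HasFDerivAt (fun y : EuclideanSpace ℝ (Fin n) => y j)
      (EuclideanSpace.proj (𝕜 := ℝ) j) x := (EuclideanSpace.proj (𝕜 := ℝ) j).hasFDerivAt
  have h := hc.fun_mul hd
  rw [h.fderiv]
  simp only [ContinuousLinearMap.add_apply, ContinuousLinearMap.smul_apply, smul_eq_mul,
    innerSL_apply_apply, EuclideanSpace.inner_single_right, RCLike.star_def, conj_trivial, one_mul,
    ]
  rw [show (EuclideanSpace.proj (𝕜 := ℝ) j) (EuclideanSpace.single i 1)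
      = (if i = j then (1:ℝ) else 0) by
    have : (EuclideanSpace.proj (𝕜 := ℝ) j) (EuclideanSpace.single i (1:ℝ))
        = (EuclideanSpace.single i (1:ℝ)) j := rfl
    rw [this, EuclideanSpace.single_apply]
    simp [eq_comm]]
  ring

lemma det_hess_eq_one {n : ℕ} (hn : 1 ≤ n) {x : EuclideanSpace ℝ (Fin n)} (hx : 1 < ‖x‖)
    (M : Matrix (Fin n) (Fin n) ℝ)
    (hM : ∀ i j, M i j = GW n ‖x‖ * (if i = j then 1 else 0)
      + (GW' n ‖x‖ * ‖x‖⁻¹) * (x i * x j)) :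
    M.det = 1 := by
  set r := ‖x‖ with hr
  have hr1 : (1:ℝ) < r := hx
  have hr0 : (0:ℝ) < r := by linarith
  have ht : (0:ℝ) < r ^ n - 1 := pow_pos_of_one_lt' hn hr1
  set t := r ^ n - 1 with htdef
  have hn0 : (n:ℝ) ≠ 0 := by positivity
  have hA : (0:ℝ) < AW n r := Real.rpow_pos_of_pos ht _
  set A := AW n r with hAdef
  set A' := AW' n r with hA'def
  have ha : (0:ℝ) < A / r := div_pos hA hr0
  set a := GW n r with hadef
  have haeq : a = A / r := rfl
  set b := GW' n r * r⁻¹ with hbdef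
  -- matrix decomposition
  have hMeq : M = a • ((1 : Matrix (Fin n) (Fin n) ℝ)
      + Matrix.replicateCol (Fin 1) (fun i => (b / a) * x i) * Matrix.replicateRow (Fin 1) (fun j => x j)) := by
    ext i j
    rw [hM i j]
    simp only [Matrix.smul_apply, Matrix.add_apply, Matrix.one_apply, smul_eq_mul,
      Matrix.mul_apply, Matrix.replicateCol_apply, Matrix.replicateRow_apply, Finset.univ_unique,
      Finset.sum_singleton]
    have ha' : a ≠ 0 := by rw [haeq]; positivity
    field_simp
  rw [hMeq, Matrix.det_smul]
  erw [Matrix.det_one_add_replicateCol_mul_replicateRow (ι := Fin 1)]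
  rw [Fintype.card_fin]
  have hr2 : ∑ j, (x j)^2 = r^2 := by
    rw [hr, EuclideanSpace.norm_eq, Real.sq_sqrt (by positivity)]
    exact Finset.sum_congr rfl fun j _ => by rw [Real.norm_eq_abs, sq_abs]
  have hdot : dotProduct (fun j => x j) (fun i => (b / a) * x i) = (b / a) * r^2 := by
    rw [dotProduct]
    have : ∀ j : Fin n, x j * ((b/a) * x j) = (b/a) * (x j)^2 := fun j => by ring
    rw [Finset.sum_congr rfl fun j _ => this j, ← Finset.mul_sum, hr2]
  rw [hdot]
  -- now pure computation
  have hApow : A ^ n = t := by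
    rw [hAdef, AW, ← Real.rpow_natCast ((t) ^ ((1:ℝ)/n)) n, ← Real.rpow_mul ht.le]
    rw [one_div, inv_mul_cancel₀ hn0, Real.rpow_one]
  have hA'r : A' * r = r^n * t ^ ((1:ℝ)/n - 1) := by
    rw [hA'def, AW']
    have hpow : r ^ (n-1) * r = r ^ n := by
      rw [← pow_succ]; congr 1; omega
    rw [← htdef]
    have hinv : (1/(n:ℝ)) * (n:ℝ) = 1 := by field_simp
    calc ((1/(n:ℝ)) * t^((1:ℝ)/n - 1) * ((n:ℝ) * r^(n-1))) * r
        = ((1/(n:ℝ)) * (n:ℝ)) * ((r^(n-1) * r) * t^((1:ℝ)/n - 1)) := by ring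
      _ = r^n * t^((1:ℝ)/n - 1) := by rw [hinv, hpow, one_mul]
  have h3 : t * t ^ ((1:ℝ)/n - 1) = A := by
    rw [hAdef, AW]
    nth_rewrite 1 [← Real.rpow_one t]
    rw [← Real.rpow_add ht]
    ring_nf
    rw [htdef]
    ring_nf
  have ha' : A ≠ 0 := ne_of_gt hA
  have hb : b / a = (A' * r - A) / (r^2 * A) := by
    rw [haeq, hbdef, GW', ← hAdef, ← hA'def]
    field_simp
  rw [hb, haeq, div_pow, hApow]
  have h2 : 1 + (A' * r - A) / (r^2 * A) * r^2 = A' * r / A := by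
    field_simp
    ring
  rw [h2, hA'r]
  have hrn : r ^ n ≠ 0 := by positivity
  calc t / r^n * (r^n * t^((1:ℝ)/n - 1) / A)
      = (t * t^((1:ℝ)/n - 1)) / A * (r^n / r^n) := by ring
    _ = 1 := by rw [h3, div_self ha', div_self hrn, one_mul]


lemma fW_contDiffAt {n : ℕ} (hn : 1 ≤ n) {r : ℝ} (hr : 1 < r) :
    ContDiffAt ℝ ⊤ (fW n) r := by
  have h1 : ContDiffAt ℝ ⊤ (fun s : ℝ => (s ^ n - 1) ^ ((1:ℝ)/n)) r :=
    (Real.contDiffAt_rpow_const_of_ne (ne_of_gt (pow_pos_of_one_lt' hn hr))).comp r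
      ((contDiff_id.pow n).sub contDiff_const).contDiffAt
  apply h1.congr_of_eventuallyEq
  filter_upwards [eventually_gt_nhds hr] with s hs
  rw [fW_eq hn hs, AW]

lemma FW_analyticAt {n : ℕ} (hn : 1 ≤ n) {r : ℝ} (hr : 1 < r) :
    AnalyticAt ℝ (FW n) r :=
  analyticAt_primitive ((fW_contDiffAt hn hr).analyticAt) (FW_hasDerivAt n hn)

end auxiliary

theorem stmt_2 (n : ℕ) (hn : 1 ≤ n)
    (W : EuclideanSpace ℝ (Fin n) → ℝ)
    (hW : ∀ x, W x = ∫ s in (0:ℝ)..‖x‖, (max (s ^ n - 1) 0) ^ ((1:ℝ)/n)) :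
    ContDiffOn ℝ (⊤ : ℕ∞) W {x | 1 < ‖x‖} ∧
      ∀ x : EuclideanSpace ℝ (Fin n), 1 < ‖x‖ → (hess n W x).det = 1 := by
  have hWdef : W = fun z : EuclideanSpace ℝ (Fin n) => FW n ‖z‖ := funext hW
  constructor
  · rw [hWdef]
    intro x hx
    have hx' : (1:ℝ) < ‖x‖ := hx
    have hx0 : x ≠ 0 := by intro h; rw [h, norm_zero] at hx'; linarith
    have h1 : ContDiffAt ℝ (⊤ : ℕ∞) (FW n) ‖x‖ := (FW_analyticAt hn hx').contDiffAt
    have h2 : ContDiffAt ℝ (⊤ : ℕ∞) (fun y : EuclideanSpace ℝ (Fin n) => ‖y‖) x :=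
      contDiffAt_norm ℝ hx0
    exact (h1.comp x h2).contDiffWithinAt
  · intro x hx
    apply det_hess_eq_one hn hx
    intro i j
    rw [hess, Matrix.of_apply]
    exact hess_entry hn W hWdef hx i j
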